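/- Let f : M → M be a continuous map on a compact metric space M, let g be a mistake function, let φ : M → ℝ be continuous, and let δ, ε > 0 be such that |φ(u) − φ(v)| < δ/2 whenever d(u,v) ≤ ε. Then for every x ∈ M, n ≥ 1 and y ∈ B_n(g;x,ε), the Birkhoff sums satisfy S_nφ(y) ≥ S_nφ(x) − C·g(n,ε) − δn/2, where C = 2‖φ‖ + δ and ‖φ‖ is the sup norm of φ. -/

import Mathlib

open MeasureTheory Filter Topology

section Preamble

variable {M : Type*}

/-- Birkhoff sum `S_n φ = ∑_{j<n} φ ∘ f^j`. -/
noncomputable def birkhoff (f : M → M) (φ : M → ℝ) (n : ℕ) (x : M) : ℝ :=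
  ∑ j ∈ Finset.range n, φ (f^[j] x)

/-- Dynamical (Bowen) ball `B_n(x,ε)`. -/
def dynBall [PseudoMetricSpace M] (f : M → M) (n : ℕ) (x : M) (ε : ℝ) : Set M :=
  {y | ∀ i < n, dist (f^[i] x) (f^[i] y) < ε}

/-- A mistake function `g : ℕ × (0,ε₀] → ℕ`, extended by `g(n,ε) = g(n,ε₀)` for `ε > ε₀`. -/
def IsMistakeFunction (g : ℕ → ℝ → ℕ) (ε₀ : ℝ) : Prop :=
  0 < ε₀ ∧ (∀ ε : ℝ, 0 < ε → ∀ n : ℕ, g n ε ≤ g (n + 1) ε) ∧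
    (∀ ε : ℝ, 0 < ε → Tendsto (fun n : ℕ => (g n ε : ℝ) / n) atTop (𝓝 0)) ∧
    (∀ ε : ℝ, ε₀ < ε → ∀ n : ℕ, g n ε = g n ε₀)

/-- Mistake dynamical ball `B_n(g;x,ε) = ⋃_{Λ ∈ I(g;n,ε)} B_Λ(x,ε)`. -/
def mistakeBall [PseudoMetricSpace M] (f : M → M) (g : ℕ → ℝ → ℕ) (n : ℕ) (x : M) (ε : ℝ) :
    Set M :=
  ⋃ Λ ∈ {Λ : Finset ℕ | Λ ⊆ Finset.range n ∧ n - g n ε ≤ Λ.card},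
    {y | ∀ i ∈ Λ, dist (f^[i] x) (f^[i] y) < ε}

/-- Entropy `H_μ(⋁_{i<n} f^{-i} α)` of the `n`-th dynamical refinement of a finite
measurable partition, encoded by a map `α : M → Fin k`. -/
noncomputable def partitionEntropy [MeasurableSpace M] (μ : Measure M) (f : M → M) {k : ℕ}
    (α : M → Fin k) (n : ℕ) : ℝ :=
  ∑ w : Fin n → Fin k, Real.negMulLog (μ {x | ∀ i : Fin n, α (f^[(i : ℕ)] x) = w i}).toReal

/-- Kolmogorov–Sinai (measure-theoretic) entropy `h_μ(f)`. -/
noncomputable def measEntropy [MeasurableSpace M] (f : M → M) (μ : Measure M) : ℝ :=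
  ⨆ (k : ℕ) (α : {α : M → Fin k // Measurable α}),
    Filter.liminf (fun n : ℕ => partitionEntropy μ f α.1 n / n) atTop

/-- `(n,ε)`-separated subsets. -/
def IsDynSeparated [PseudoMetricSpace M] (f : M → M) (n : ℕ) (ε : ℝ) (E : Finset M) : Prop :=
  ∀ x ∈ E, ∀ y ∈ E, x ≠ y → ∃ i < n, ε ≤ dist (f^[i] x) (f^[i] y)

/-- Topological entropy via `(n,ε)`-separated sets. -/
noncomputable def topEntropy [PseudoMetricSpace M] (f : M → M) : EReal :=
  ⨆ (ε : ℝ) (_ : 0 < ε), Filter.limsup (fun n : ℕ =>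
    ((Real.log (sSup {k : ℕ | ∃ E : Finset M, IsDynSeparated f n ε E ∧ E.card = k} : ℕ) /
      n : ℝ) : EReal)) atTop

/-- Non-additive topological pressure `P(f,Φ)`. -/
noncomputable def nonAddPressure [PseudoMetricSpace M] (f : M → M) (Φ : ℕ → M → ℝ) : EReal :=
  ⨆ (ε : ℝ) (_ : 0 < ε), Filter.limsup (fun n : ℕ =>
    ((Real.log (sSup {r : ℝ | ∃ E : Finset M, IsDynSeparated f n ε E ∧
        r = ∑ y ∈ E, Real.exp (Φ n y)}) / n : ℝ) : EReal)) atTop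

/-- `F_*(μ,Φ) = lim_n (1/n) ∫ φ_n dμ` (as a `limsup`, which equals the limit whenever the
latter exists). -/
noncomputable def Fstar [MeasurableSpace M] (Φ : ℕ → M → ℝ) (μ : Measure M) : ℝ :=
  Filter.limsup (fun n : ℕ => (∫ x, Φ n x ∂μ) / n) atTop

/-- Sub-additive sequence of potentials. -/
def SubAdditiveSeq (f : M → M) (Φ : ℕ → M → ℝ) : Prop :=
  ∀ m, 1 ≤ m → ∀ n, 1 ≤ n → ∀ x, Φ (m + n) x ≤ Φ m x + Φ n (f^[m] x)

/-- Almost additive sequence of potentials, with constant `C`. -/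
def AlmostAdditiveSeq (f : M → M) (Φ : ℕ → M → ℝ) (C : ℝ) : Prop :=
  ∀ m, 1 ≤ m → ∀ n, 1 ≤ n → ∀ x,
    Φ m x + Φ n (f^[m] x) - C ≤ Φ (m + n) x ∧ Φ (m + n) x ≤ Φ m x + Φ n (f^[m] x) + C

/-- Asymptotically additive sequence of continuous potentials. -/
def AsympAdditive [MetricSpace M] (f : M → M) (Φ : ℕ → M → ℝ) : Prop :=
  (∀ n, Continuous (Φ n)) ∧ ∀ ξ : ℝ, 0 < ξ → ∃ φ : M → ℝ, Continuous φ ∧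
    Filter.limsup (fun n : ℕ => (⨆ x, |Φ n x - birkhoff f φ n x|) / n) atTop < ξ

/-- Weak Gibbs measure for `Φ` on `Λ`. -/
def WeakGibbs [MetricSpace M] [MeasurableSpace M] (f : M → M) (Φ : ℕ → M → ℝ)
    (ν : Measure M) (Λ : Set M) : Prop :=
  ν Λ = 1 ∧ ∃ ε₀ > (0 : ℝ), ∀ ε : ℝ, 0 < ε → ε < ε₀ → ∃ K : ℕ → ℝ, (∀ n, 0 < K n) ∧
    Tendsto (fun n : ℕ => Real.log (K n) / n) atTop (𝓝 0) ∧
    ∀ x ∈ Λ, ∀ n : ℕ, 1 ≤ n →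
      (K n)⁻¹ * Real.exp (-(n : ℝ) * (nonAddPressure f Φ).toReal + Φ n x) ≤
          (ν (dynBall f n x ε)).toReal ∧
        (ν (dynBall f n x ε)).toReal ≤
          K n * Real.exp (-(n : ℝ) * (nonAddPressure f Φ).toReal + Φ n x)

/-- Gibbs measure for `Φ` (uniform constant `K`). -/
def GibbsMeasure [MetricSpace M] [MeasurableSpace M] (f : M → M) (Φ : ℕ → M → ℝ)
    (ν : Measure M) : Prop :=
  ∃ ε₀ > (0 : ℝ), ∃ K : ℝ, 0 < K ∧ ∀ ε : ℝ, 0 < ε → ε < ε₀ → ∀ x : M, ∀ n : ℕ, 1 ≤ n →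
    K⁻¹ * Real.exp (-(n : ℝ) * (nonAddPressure f Φ).toReal + Φ n x) ≤
        (ν (dynBall f n x ε)).toReal ∧
      (ν (dynBall f n x ε)).toReal ≤
        K * Real.exp (-(n : ℝ) * (nonAddPressure f Φ).toReal + Φ n x)

/-- Equilibrium state: an invariant probability measure attaining the variational principle. -/
def IsEquilibriumState [MetricSpace M] [MeasurableSpace M] (f : M → M) (Φ : ℕ → M → ℝ)
    (μ : Measure M) : Prop :=
  IsProbabilityMeasure μ ∧ MeasurePreserving f μ μ ∧
    ((measEntropy f μ + Fstar Φ μ : ℝ) : EReal) = nonAddPressure f Φ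

/-- Specification property. -/
def SpecificationProperty [MetricSpace M] (f : M → M) : Prop :=
  ∀ ε : ℝ, 0 < ε → ∃ N : ℕ, 1 ≤ N ∧
    ∀ (k : ℕ) (xs : Fin k → M) (ns ps : Fin k → ℕ), (∀ i, N ≤ ps i) →
      ∃ x : M, ∀ i : Fin k, ∀ j ≤ ns i,
        dist (f^[j + ∑ l ∈ Finset.univ.filter (fun l => l < i), (ns l + ps l)] x)
          (f^[j] (xs i)) ≤ ε

/-- `g`-almost specification property. -/
def AlmostSpecification [MetricSpace M] (f : M → M) (g : ℕ → ℝ → ℕ) : Prop :=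
  ∃ ε > (0 : ℝ), ∃ N : ℕ, ∀ (k : ℕ) (xs : Fin k → M) (ns : Fin k → ℕ), (∀ i, N ≤ ns i) →
    (⋂ i : Fin k,
      f^[∑ l ∈ Finset.univ.filter (fun l => l < i), ns l] ⁻¹'
        mistakeBall f g (ns i) (xs i) ε).Nonempty

/-- `h_m(g;f,x) = lim_{ε→0} limsup_n −(1/n) log m(B_n(g;x,ε))`. -/
noncomputable def mistakeUpper [MetricSpace M] [MeasurableSpace M] (m : Measure M) (f : M → M)
    (g : ℕ → ℝ → ℕ) (x : M) : ℝ :=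
  Filter.limsup (fun ε : ℝ =>
    Filter.limsup (fun n : ℕ => -Real.log ((m (mistakeBall f g n x ε)).toReal) / n) atTop)
    (𝓝[>] 0)

/-- Weak Bowen condition for a sequence of potentials. -/
def WeakBowen [MetricSpace M] (f : M → M) (Ψ : ℕ → M → ℝ) : Prop :=
  ∃ δ > (0 : ℝ), ∃ a : ℕ → ℝ, (∀ n, 0 < a n) ∧
    Tendsto (fun n : ℕ => a n / n) atTop (𝓝 0) ∧
    ∀ n, 1 ≤ n → ∀ x y z : M, y ∈ dynBall f n x δ → z ∈ dynBall f n x δ →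
      |Ψ n y - Ψ n z| ≤ a n

end Preamble

open Finset

theorem sum_le_card_sdiff_nsmul_add_card_nsmul {ι α : Type*} [DecidableEq ι] [AddCommMonoid α]
    [PartialOrder α] [IsOrderedAddMonoid α] {s t : Finset ι} (hts : t ⊆ s) {a : ι → α} {A B : α}
    (hA : ∀ i ∈ s \ t, a i ≤ A) (hB : ∀ i ∈ t, a i ≤ B) :
    ∑ i ∈ s, a i ≤ #(s \ t) • A + #t • B := by
  rw [← sum_sdiff hts]
  exact add_le_add (sum_le_card_nsmul _ _ _ hA) (sum_le_card_nsmul _ _ _ hB)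

theorem card_sdiff_le_of_card_sub_le {ι : Type*} [DecidableEq ι] {s t : Finset ι} (hts : t ⊆ s)
    {k : ℕ} (h : #s - k ≤ #t) : #(s \ t) ≤ k := by
  rw [card_sdiff_of_subset hts]
  omega

theorem sub_le_two_mul_iSup_abs {M : Type*} [TopologicalSpace M] [CompactSpace M] {φ : M → ℝ}
    (hφ : Continuous φ) (u v : M) : φ u - φ v ≤ 2 * ⨆ z, |φ z| := by
  have hbdd : BddAbove (Set.range fun z ↦ |φ z|) := by
    have : Nonempty M := ⟨u⟩
    simpa [Set.image_univ] using isCompact_univ.bddAbove_image hφ.abs.continuousOn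
  calc φ u - φ v ≤ |φ u| + |φ v| := (le_abs_self _).trans (abs_sub _ _)
    _ ≤ 2 * ⨆ z, |φ z| := by linarith [le_ciSup hbdd u, le_ciSup hbdd v]

section Birkhoff

variable {M : Type*}

theorem birkhoff_sub_birkhoff (f : M → M) (φ : M → ℝ) (n : ℕ) (x y : M) :
    birkhoff f φ n x - birkhoff f φ n y = ∑ j ∈ range n, (φ (f^[j] x) - φ (f^[j] y)) :=
  (sum_sub_distrib _ _).symm

theorem mem_mistakeBall_iff [PseudoMetricSpace M] {f : M → M} {g : ℕ → ℝ → ℕ} {n : ℕ}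
    {x y : M} {ε : ℝ} : y ∈ mistakeBall f g n x ε ↔
      ∃ Λ ⊆ range n, n - g n ε ≤ #Λ ∧ ∀ i ∈ Λ, dist (f^[i] x) (f^[i] y) < ε := by
  simp [mistakeBall, and_assoc]

end Birkhoff

theorem birkhoff_mistakeBall_bound_general {M : Type*} [MetricSpace M] [CompactSpace M]
    (f : M → M)
    (g : ℕ → ℝ → ℕ)
    (φ : M → ℝ) (hφ : Continuous φ) (δ ε : ℝ) (hδ : 0 < δ)
    (hmod : ∀ u v : M, dist u v ≤ ε → |φ u - φ v| < δ / 2) :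
    ∀ x : M, ∀ n : ℕ, 1 ≤ n → ∀ y ∈ mistakeBall f g n x ε,
      birkhoff f φ n x - (2 * (⨆ z : M, |φ z|) + δ) * g n ε - δ * n / 2 ≤
        birkhoff f φ n y := by
  intro x n _ y hy
  obtain ⟨Λ, hΛ, hcard, hclose⟩ := mem_mistakeBall_iff.1 hy
  have hS : 0 ≤ 2 * ⨆ z, |φ z| := by simpa using sub_le_two_mul_iSup_abs hφ x x
  have hsum := sum_le_card_sdiff_nsmul_add_card_nsmul hΛ
    (a := fun j ↦ φ (f^[j] x) - φ (f^[j] y))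
    (fun j _ ↦ sub_le_two_mul_iSup_abs hφ _ _)
    (fun j hj ↦ ((le_abs_self _).trans_lt (hmod _ _ (hclose j hj).le)).le)
  have hmistakes : (#(range n \ Λ) : ℝ) ≤ g n ε := by
    exact_mod_cast card_sdiff_le_of_card_sub_le hΛ (by rwa [card_range])
  have hgood : (#Λ : ℝ) ≤ n := by exact_mod_cast (card_le_card hΛ).trans (card_range n).le
  rw [nsmul_eq_mul, nsmul_eq_mul, ← birkhoff_sub_birkhoff] at hsum
  have hcoeff : (#(range n \ Λ) : ℝ) * (2 * ⨆ z, |φ z|) + #Λ * (δ / 2) ≤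
      g n ε * (2 * (⨆ z, |φ z|) + δ) + n * (δ / 2) := by
    gcongr
    linarith
  linarith

/-- control of Birkhoff sums on mistake dynamical balls: if `|φ(u) − φ(v)| < δ/2`
whenever `d(u,v) ≤ ε`, then `S_nφ(y) ≥ S_nφ(x) − C·g(n,ε) − δn/2` for `y ∈ B_n(g;x,ε)`, where
`C = 2‖φ‖ + δ`. -/
theorem birkhoff_mistakeBall_bound {M : Type*} [MetricSpace M] [CompactSpace M]
    (f : M → M) (hf : Continuous f)
    (g : ℕ → ℝ → ℕ) (ε₀ : ℝ) (hg : IsMistakeFunction g ε₀)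
    (φ : M → ℝ) (hφ : Continuous φ) (δ ε : ℝ) (hδ : 0 < δ) (hε : 0 < ε)
    (hmod : ∀ u v : M, dist u v ≤ ε → |φ u - φ v| < δ / 2) :
    ∀ x : M, ∀ n : ℕ, 1 ≤ n → ∀ y ∈ mistakeBall f g n x ε,
      birkhoff f φ n x - (2 * (⨆ z : M, |φ z|) + δ) * g n ε - δ * n / 2 ≤
        birkhoff f φ n y :=
  birkhoff_mistakeBall_bound_general f g φ hφ δ ε hδ hmod
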